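/- Let n ≥ 1, let q > 0 and q' be real numbers, let w_1,…,w_n ≥ 0, and let χ : 2^N → {0,1} be defined by χ(S) = 1 if and only if ∑_{i∈S} w_i ≥ q and |S| ≥ q' (a game with consensus, i.e. the intersection of the weighted game [q; w_1,…,w_n] with the symmetric game [q'; 1,…,1]). If χ is a simple game (χ(∅) = 0 and χ(N) = 1), then μ(χ) ≤ √n; that is, χ is √n-roughly weighted. -/

import Mathlib

/-!
Two weightings cover all cases. If `q' ≤ √n`, give player `i` the capped weight
`min (wᵢ / q) 1`: a coalition of weight at least `q` gets at least `1`, a coalition of weight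
below `q` gets at most `1`, and any coalition gets at most its size, which for a losing coalition
of weight at least `q` is below `q' ≤ √n`. If `q' > √n`, the uniform weight `1 / q'` gives every
winning coalition at least `1` and every coalition at most `n / q' < √n`.
-/

open Finset

/-- `f` is `α`-roughly weighted: there are real weights such that every winning
coalition has weight at least `1` and every losing coalition weight at most `α`. -/
def RoughlyWeighted {n : ℕ} (f : Finset (Fin n) → Bool) (α : ℝ) : Prop :=
  ∃ w : Fin n → ℝ,
    (∀ S : Finset (Fin n), f S = true → 1 ≤ ∑ i ∈ S, w i) ∧
    (∀ S : Finset (Fin n), f S = false → ∑ i ∈ S, w i ≤ α)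

/-- The critical threshold value `μ(f)`: the smallest `α ≥ 1` such that `f` is
`α`-roughly weighted. -/
noncomputable def mu {n : ℕ} (f : Finset (Fin n) → Bool) : ℝ :=
  sInf {α : ℝ | 1 ≤ α ∧ RoughlyWeighted f α}

/-- A simple game: monotone, the empty coalition loses and the grand coalition wins. -/
def SimpleGame {n : ℕ} (χ : Finset (Fin n) → Bool) : Prop :=
  χ ∅ = false ∧ χ Finset.univ = true ∧
    ∀ S T : Finset (Fin n), S ⊆ T → χ S = true → χ T = true

lemma RoughlyWeighted.mono {n : ℕ} {f : Finset (Fin n) → Bool} {α β : ℝ}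
    (h : RoughlyWeighted f α) (hαβ : α ≤ β) : RoughlyWeighted f β := by
  obtain ⟨v, hwin, hlose⟩ := h
  exact ⟨v, hwin, fun S hS => (hlose S hS).trans hαβ⟩

lemma mu_le_of_roughlyWeighted {n : ℕ} {f : Finset (Fin n) → Bool} {α : ℝ}
    (hα : 1 ≤ α) (h : RoughlyWeighted f α) : mu f ≤ α :=
  csInf_le ⟨1, fun _ hβ => hβ.1⟩ ⟨hα, h⟩

lemma one_le_sum_min_div_one {ι : Type*} {S : Finset ι} {w : ι → ℝ} {q : ℝ}
    (hq : 0 < q) (hw : ∀ i, 0 ≤ w i) (hS : q ≤ ∑ i ∈ S, w i) :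
    1 ≤ ∑ i ∈ S, min (w i / q) 1 := by
  have hnonneg : ∀ i ∈ S, 0 ≤ min (w i / q) 1 :=
    fun i _ => le_min (div_nonneg (hw i) hq.le) zero_le_one
  by_cases hbig : ∃ i ∈ S, 1 ≤ w i / q
  · obtain ⟨i, hi, h1⟩ := hbig
    exact (min_eq_right h1).symm.le.trans (single_le_sum hnonneg hi)
  · push Not at hbig
    rw [sum_congr rfl fun i hi => min_eq_left (hbig i hi).le, ← sum_div, le_div_iff₀ hq]
    linarith

lemma roughlyWeighted_div_of_card_le {n : ℕ} {f : Finset (Fin n) → Bool} {q' : ℝ}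
    (hq' : 0 < q') (hwin : ∀ S, f S = true → q' ≤ (S.card : ℝ)) :
    RoughlyWeighted f (n / q') := by
  refine ⟨fun _ => 1 / q', fun S hS => ?_, fun S _ => ?_⟩
  · rw [sum_const, nsmul_eq_mul, mul_one_div, le_div_iff₀ hq', one_mul]
    exact hwin S hS
  · rw [sum_const, nsmul_eq_mul, mul_one_div]
    gcongr
    exact_mod_cast (card_le_univ S).trans_eq (Fintype.card_fin n)

lemma roughlyWeighted_consensus_of_quota_le {n : ℕ} {q q' α : ℝ} (hq : 0 < q)
    {w : Fin n → ℝ} (hw : ∀ i, 0 ≤ w i) {χ : Finset (Fin n) → Bool}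
    (hdef : ∀ S, χ S = true ↔ (q ≤ ∑ i ∈ S, w i ∧ q' ≤ (S.card : ℝ)))
    (hα : 1 ≤ α) (hq'α : q' ≤ α) : RoughlyWeighted χ α := by
  refine ⟨fun i => min (w i / q) 1, fun S hS => ?_, fun S hS => ?_⟩
  · exact one_le_sum_min_div_one hq hw ((hdef S).mp hS).1
  · have hlose : q ≤ ∑ i ∈ S, w i → (S.card : ℝ) < q' := by
      intro hweight
      by_contra! hcard
      simp [(hdef S).mpr ⟨hweight, hcard⟩] at hS
    have hcapped := sum_min_le (f := fun i => w i / q) (g := fun _ => (1 : ℝ)) (s := S)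
    rw [← sum_div, sum_const, nsmul_one] at hcapped
    by_cases hweight : q ≤ ∑ i ∈ S, w i
    · linarith [min_le_right ((∑ i ∈ S, w i) / q) (S.card : ℝ), hlose hweight]
    · have : (∑ i ∈ S, w i) / q ≤ 1 := (div_le_one hq).mpr (not_le.mp hweight).le
      linarith [min_le_left ((∑ i ∈ S, w i) / q) (S.card : ℝ)]

theorem game_with_consensus_sqrt_bound_general (n : ℕ) (hn : 1 ≤ n)
    (q q' : ℝ) (hq : 0 < q) (w : Fin n → ℝ) (hw : ∀ i : Fin n, 0 ≤ w i)
    (χ : Finset (Fin n) → Bool)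
    (hdef : ∀ S : Finset (Fin n),
      χ S = true ↔ (q ≤ ∑ i ∈ S, w i ∧ q' ≤ (S.card : ℝ))) :
    mu χ ≤ Real.sqrt n ∧ RoughlyWeighted χ (Real.sqrt n) := by
  have hsqrt : 1 ≤ Real.sqrt n := Real.one_le_sqrt.mpr (by exact_mod_cast hn)
  have hRW : RoughlyWeighted χ (Real.sqrt n) := by
    by_cases hq' : q' ≤ Real.sqrt n
    · exact roughlyWeighted_consensus_of_quota_le hq hw hdef hsqrt hq'
    · rw [not_le] at hq'
      have hpos : 0 < Real.sqrt n := one_pos.trans_le hsqrt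
      refine (roughlyWeighted_div_of_card_le (hpos.trans hq')
        fun S hS => ((hdef S).mp hS).2).mono ?_
      calc (n : ℝ) / q' ≤ n / Real.sqrt n := by gcongr
        _ = Real.sqrt n := Real.div_sqrt
  exact ⟨mu_le_of_roughlyWeighted hsqrt hRW, hRW⟩

/-- a game with consensus, i.e. the intersection of a weighted game
`[q; w₁,…,wₙ]` with a symmetric game `[q'; 1,…,1]`, has critical threshold value at
most `√n`. -/
theorem game_with_consensus_sqrt_bound (n : ℕ) (hn : 1 ≤ n)
    (q q' : ℝ) (hq : 0 < q) (w : Fin n → ℝ) (hw : ∀ i : Fin n, 0 ≤ w i)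
    (χ : Finset (Fin n) → Bool)
    (hdef : ∀ S : Finset (Fin n),
      χ S = true ↔ (q ≤ ∑ i ∈ S, w i ∧ q' ≤ (S.card : ℝ)))
    (h0 : χ ∅ = false) (hN : χ Finset.univ = true) :
    mu χ ≤ Real.sqrt n ∧ RoughlyWeighted χ (Real.sqrt n) :=
  game_with_consensus_sqrt_bound_general n hn q q' hq w hw χ hdef
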